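/- For every natural number n ≥ 1 and every real number s, |s| · d/ds(tanh(ns)) ≤ 4, i.e. |s| · n · sech²(ns) ≤ 4. -/

import Mathlib

/-! Writing `x = n s`, the claim is `|x| sech² x ≤ 4`. Since `sinh` dominates the identity,
`cosh² x = 1 + sinh² x ≥ 1 + x² ≥ 2 |x|`, so in fact `|x| sech² x ≤ 1 / 2`. -/

open Real

lemma sq_le_sinh_sq (x : ℝ) : x ^ 2 ≤ sinh x ^ 2 := by
  rw [sq_le_sq, abs_sinh]
  exact self_le_sinh_iff.mpr (abs_nonneg x)

lemma two_mul_abs_le_cosh_sq (x : ℝ) : 2 * |x| ≤ cosh x ^ 2 := by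
  rw [cosh_sq]
  nlinarith [sq_le_sinh_sq x, sq_nonneg (|x| - 1), sq_abs x]

lemma abs_mul_inv_cosh_sq_le (x : ℝ) : |x| * (cosh x)⁻¹ ^ 2 ≤ 1 / 2 := by
  rw [inv_pow, ← div_eq_mul_inv, div_le_iff₀ (by positivity)]
  linarith [two_mul_abs_le_cosh_sq x]

lemma two_div_exp_add_exp_neg (x : ℝ) : 2 / (exp x + exp (-x)) = (cosh x)⁻¹ := by
  rw [cosh_eq, inv_div]

theorem stmt_0_general (n : ℕ) (s : ℝ) :
    |s| * (n : ℝ) * (2 / (Real.exp ((n : ℝ) * s) + Real.exp (-((n : ℝ) * s))))^2 ≤ 4 := by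
  have h_abs : |s| * (n : ℝ) = |(n : ℝ) * s| := by
    rw [abs_mul, Nat.abs_cast, mul_comm]
  rw [h_abs, two_div_exp_add_exp_neg]
  linarith [abs_mul_inv_cosh_sq_le ((n : ℝ) * s)]

/-- For every `n ≥ 1` and `s : ℝ`, `|s| * n * sech² (n s) ≤ 4`,
where `sech x = 2 / (exp x + exp (-x))`. -/
theorem stmt_0 (n : ℕ) (hn : 1 ≤ n) (s : ℝ) :
    |s| * (n : ℝ) * (2 / (Real.exp ((n : ℝ) * s) + Real.exp (-((n : ℝ) * s))))^2 ≤ 4 :=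
  stmt_0_general n s
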